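/- Let n ≥ 3 and consider triples of 'red' labels r_{ij} indexed by pairs i,j from a set B, with the consistency condition: a triple (r_{ij}, r_{j'k'}, r_{i*k*}) is forbidden unless i = i*, j = j', and k' = k*. Then the relation on red labels given by 'the triple is allowed' defines, on any clique all of whose edges are labelled by reds, a consistent assignment if and only if there is a single function f from the clique's vertices to B such that the edge (x,y) is labelled r_{f(x),f(y)}. -/

import Mathlib

/-! Within a triangle `x, y, z` consistency forces `(L x y).1 = (L x z).1`, so the first index of a
label depends only on its first endpoint; that index is the colour `f x`. Symmetry turns the second
index of `L x y` into the first index of `L y x`, which is `f y`. -/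

section RedClique

variable {V B : Type*} {L : V → V → B × B}

theorem fst_label_eq_of_consistent
    (H : ∀ x y z : V, x ≠ y → y ≠ z → x ≠ z →
      ((L x y).1 = (L x z).1 ∧ (L x y).2 = (L y z).1 ∧ (L y z).2 = (L x z).2))
    {x y z : V} (hxy : x ≠ y) (hxz : x ≠ z) : (L x y).1 = (L x z).1 := by
  rcases eq_or_ne y z with rfl | hyz
  · rfl
  · exact (H x y z hxy hyz hxz).1

theorem exists_colouring_of_fst_label_eq
    (hsym : ∀ x y : V, x ≠ y → L y x = ((L x y).2, (L x y).1))
    (hrow : ∀ {x y z : V}, x ≠ y → x ≠ z → (L x y).1 = (L x z).1) :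
    ∃ f : V → B, ∀ x y : V, x ≠ y → L x y = (f x, f y) := by
  -- `f x` reads the row of `x` at some vertex other than `x`; if there is none, `f x` is never used.
  let f : V → B := fun x => (L x (@Classical.epsilon V ⟨x⟩ (· ≠ x))).1
  have hf : ∀ {x y : V}, x ≠ y → (L x y).1 = f x := fun {x y} hxy =>
    hrow hxy (@Classical.epsilon_spec V (· ≠ x) ⟨y, hxy.symm⟩).symm
  refine ⟨f, fun x y hxy => Prod.ext (hf hxy) ?_⟩
  calc (L x y).2 = (L y x).1 := by rw [hsym x y hxy]
    _ = f y := hf hxy.symm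

theorem consistent_of_colouring {f : V → B} (hf : ∀ x y : V, x ≠ y → L x y = (f x, f y))
    {x y z : V} (hxy : x ≠ y) (hyz : y ≠ z) (hxz : x ≠ z) :
    (L x y).1 = (L x z).1 ∧ (L x y).2 = (L y z).1 ∧ (L y z).2 = (L x z).2 := by
  simp only [hf x y hxy, hf y z hyz, hf x z hxz, and_self]

end RedClique

/-- Characterization of consistent red cliques. A clique with all edges labelled by
reds `r_{ij}` (the label of edge `(x,y)` coded as the pair `L x y ∈ B × B`, with the
symmetry `L y x = (j, i)` when `L x y = (i, j)`) is consistent — every triangle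
`(r_{ij}, r_{jk}, r_{ik})` is allowed, i.e. the indices match — if and only if the
labelling is induced by a single vertex colouring `f : V → B` with edge `(x, y)`
labelled `r_{f x, f y}`. -/
theorem red_clique_consistent_iff_colouring {V B : Type*} (L : V → V → B × B)
    (hsym : ∀ x y : V, x ≠ y → L y x = ((L x y).2, (L x y).1)) :
    ((∀ x y z : V, x ≠ y → y ≠ z → x ≠ z →
        ((L x y).1 = (L x z).1 ∧ (L x y).2 = (L y z).1 ∧ (L y z).2 = (L x z).2)) ↔
      ∃ f : V → B, ∀ x y : V, x ≠ y → L x y = (f x, f y)) :=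
  ⟨fun H => exists_colouring_of_fst_label_eq hsym (fst_label_eq_of_consistent H),
    fun ⟨_, hf⟩ _ _ _ => consistent_of_colouring hf⟩
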